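/- arXiv:2208.13875 — 2 statements merged into one kernel-verified Lean document; each statement's English description precedes it below -/
import Mathlib

section
/- If ψ̄(r,t) solves ∂ₜψ̄ = ψ̄_rr + (5/r)ψ̄_r + (6 - 2r²ψ̄)ψ̄², then so does the function 2/r² - ψ̄(r,t). -/
/-!
Reflection acts on each part of the equation separately. The linear part
`u ↦ u_rr + (5/r) u_r` is additive, and `2/r²` is annihilated by the whole operator:
`12/r⁴ - 20/r⁴ + 8/r⁴ = 0`. The nonlinearity `N(u) = (6 - 2r²u)u²` is a cubic in `u` with
inflection point `1/r²`, the midpoint of `0` and `2/r²`, hence `N(2/r² - u) = N(2/r²) - N(u)`.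
-/

open Set Filter Topology

theorem ContDiffOn.uncurry_right {𝕜 E F G : Type*} [NontriviallyNormedField 𝕜]
    [NormedAddCommGroup E] [NormedSpace 𝕜 E] [NormedAddCommGroup F] [NormedSpace 𝕜 F]
    [NormedAddCommGroup G] [NormedSpace 𝕜 G] {n : WithTop ℕ∞} {f : E → F → G} {s : Set E}
    {t : Set F} (y : F) (hy : y ∈ t) (h : ContDiffOn 𝕜 n (Function.uncurry f) (s ×ˢ t)) :
    ContDiffOn 𝕜 n (fun x => f x y) s :=
  h.comp (contDiff_id.prodMk contDiff_const).contDiffOn fun _ hx => ⟨hx, hy⟩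

section Deriv

variable {𝕜 : Type*} [NontriviallyNormedField 𝕜]
variable {F : Type*} [NormedAddCommGroup F] [NormedSpace 𝕜 F]

theorem deriv_deriv_sub {f g : 𝕜 → F} {x : 𝕜} (hf : ∀ᶠ y in 𝓝 x, DifferentiableAt 𝕜 f y)
    (hg : ∀ᶠ y in 𝓝 x, DifferentiableAt 𝕜 g y) (hf' : DifferentiableAt 𝕜 (deriv f) x)
    (hg' : DifferentiableAt 𝕜 (deriv g) x) :
    deriv (deriv fun y => f y - g y) x = deriv (deriv f) x - deriv (deriv g) x := by
  have hderiv : deriv (fun y => f y - g y) =ᶠ[𝓝 x] fun y => deriv f y - deriv g y := by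
    filter_upwards [hf, hg] with y hfy hgy
    exact deriv_fun_sub hfy hgy
  rw [hderiv.deriv_eq, deriv_fun_sub hf' hg']

theorem hasDerivAt_const_div_pow (c : 𝕜) (n : ℕ) {x : 𝕜} (hx : x ≠ 0) :
    HasDerivAt (fun y => c / y ^ n) (-(c * n) / x ^ (n + 1)) x := by
  have h := ((hasDerivAt_pow n x).fun_inv (pow_ne_zero n hx)).const_mul c
  simp only [← div_eq_mul_inv] at h
  refine h.congr_deriv ?_
  rcases n with _ | n
  · simp
  · rw [Nat.add_sub_cancel]
    field_simp
    ring

theorem deriv_const_div_pow_eventuallyEq (c : 𝕜) (n : ℕ) {x : 𝕜} (hx : x ≠ 0) :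
    deriv (fun y => c / y ^ n) =ᶠ[𝓝 x] fun y => -(c * n) / y ^ (n + 1) := by
  filter_upwards [isOpen_ne.mem_nhds hx] with y hy
  exact (hasDerivAt_const_div_pow c n hy).deriv

theorem hasDerivAt_deriv_const_div_pow (c : 𝕜) (n : ℕ) {x : 𝕜} (hx : x ≠ 0) :
    HasDerivAt (deriv fun y => c / y ^ n) (c * n * (n + 1) / x ^ (n + 2)) x := by
  refine ((hasDerivAt_const_div_pow _ (n + 1) hx).congr_of_eventuallyEq
    (deriv_const_div_pow_eventuallyEq c n hx)).congr_deriv ?_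
  push_cast
  ring

theorem deriv_deriv_const_div_pow_sub {f : 𝕜 → 𝕜} (c : 𝕜) (n : ℕ) {x : 𝕜} (hx : x ≠ 0)
    (hf : ∀ᶠ y in 𝓝 x, DifferentiableAt 𝕜 f y) (hf' : DifferentiableAt 𝕜 (deriv f) x) :
    deriv (deriv fun y => c / y ^ n - f y) x
      = c * n * (n + 1) / x ^ (n + 2) - deriv (deriv f) x := by
  have hpow : ∀ᶠ y in 𝓝 x, DifferentiableAt 𝕜 (fun y => c / y ^ n) y := by
    filter_upwards [isOpen_ne.mem_nhds hx] with y hy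
    exact (hasDerivAt_const_div_pow c n hy).differentiableAt
  rw [deriv_deriv_sub hpow hf (hasDerivAt_deriv_const_div_pow c n hx).differentiableAt hf',
    (hasDerivAt_deriv_const_div_pow c n hx).deriv]

end Deriv

theorem cubic_nonlinearity_reflect {r : ℝ} (hr : r ≠ 0) (u : ℝ) :
    (6 - 2 * r ^ 2 * (2 / r ^ 2 - u)) * (2 / r ^ 2 - u) ^ 2
      = 8 / r ^ 4 - (6 - 2 * r ^ 2 * u) * u ^ 2 := by
  field_simp
  ring

/-- If ψ̄ solves ∂ₜψ̄ = ψ̄_rr + (5/r)ψ̄_r + (6 - 2r²ψ̄)ψ̄² on (0,∞)×(0,T), then so does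
the function 2/r² - ψ̄. -/
theorem reflection_solution (T : ℝ) (ψ : ℝ → ℝ → ℝ)
    (hreg : ContDiffOn ℝ 2 (fun p : ℝ × ℝ => ψ p.1 p.2) (Ioi 0 ×ˢ Ioo 0 T))
    (heq : ∀ r ∈ Ioi (0 : ℝ), ∀ t ∈ Ioo (0 : ℝ) T,
      deriv (fun s => ψ r s) t
        = deriv (deriv (fun ρ => ψ ρ t)) r + (5 / r) * deriv (fun ρ => ψ ρ t) r
          + (6 - 2 * r ^ 2 * ψ r t) * (ψ r t) ^ 2) :
    ∀ r ∈ Ioi (0 : ℝ), ∀ t ∈ Ioo (0 : ℝ) T,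
      deriv (fun s => 2 / r ^ 2 - ψ r s) t
        = deriv (deriv (fun ρ => 2 / ρ ^ 2 - ψ ρ t)) r
          + (5 / r) * deriv (fun ρ => 2 / ρ ^ 2 - ψ ρ t) r
          + (6 - 2 * r ^ 2 * (2 / r ^ 2 - ψ r t)) * (2 / r ^ 2 - ψ r t) ^ 2 := by
  intro r hr t ht
  have hr0 : r ≠ 0 := hr.ne'
  have hslice : ContDiffOn ℝ 2 (fun ρ => ψ ρ t) (Ioi 0) := hreg.uncurry_right t ht
  have hdiff : ∀ᶠ ρ in 𝓝 r, DifferentiableAt ℝ (fun ρ => ψ ρ t) ρ := by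
    filter_upwards [isOpen_Ioi.mem_nhds hr] with ρ hρ
    exact (hslice.differentiableOn two_ne_zero).differentiableAt (isOpen_Ioi.mem_nhds hρ)
  have hdiff' : DifferentiableAt ℝ (deriv fun ρ => ψ ρ t) r :=
    have hslice' := hslice.deriv_of_isOpen (m := 1) isOpen_Ioi le_rfl
    (hslice'.differentiableOn one_ne_zero).differentiableAt (isOpen_Ioi.mem_nhds hr)
  have hsteady := hasDerivAt_const_div_pow (2 : ℝ) 2 hr0
  rw [deriv_const_sub, deriv_fun_sub hsteady.differentiableAt hdiff.self_of_nhds, hsteady.deriv,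
    deriv_deriv_const_div_pow_sub 2 2 hr0 hdiff hdiff', cubic_nonlinearity_reflect hr0,
    heq r hr t ht]
  field_simp
  ring
end

section
/- Let κ₀ > 0 and μ(t) = e^{-κ₀t}. Under the change of variables ŝ = √(t-s̃)/μ(s̃), one has ds̃ = -μ(s̃)/((1/2)(t-s̃)^{-1/2} + μ'(s̃)ŝ) dŝ, and for any continuous Ω ≥ 0 with ∫₀^∞ ŝ⁻³ Ω(ŝ⁻²) dŝ < ∞, lim_{δ→0⁺, t→∞} ∫_{t-δ}^t (μ(s̃)μ'(s̃)/(t-s̃)²) Ω(μ(s̃)²/(t-s̃)) ds̃ = -2κ₀ ∫₀^∞ ŝ⁻³ Ω(ŝ⁻²) dŝ in the sense that the integral equals -2κ₀(∫₀^{√δ/μ(t-δ)} ŝ⁻³Ω(ŝ⁻²)dŝ + o(1)) as δκ₀ → 0 and √δ/μ(t-δ) → ∞. -/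
/-!
In the self-similar variable `ŝ = f(s) = √(t - s) / μ(s)` one has
`|f'(s)| = (1/2 - κ₀ (t - s)) / (√(t - s) μ(s))`, so for `κ₀ δ < 1/2` the map `f` decreases from
`f(t - δ)` to `0` on `[t - δ, t]` and the Jacobian formula turns `∫₀^{f(t-δ)} ŝ⁻³ Ω(ŝ⁻²) dŝ` into
`∫ (1/2 - κ₀ (t - s)) D(s) ds` with `D(s) = μ²/(t - s)² · Ω(μ²/(t - s))`. Since
`μ μ' = -κ₀ μ²`, the near-field integrand is `-2κ₀ (1/2 - κ₀ (t - s)) D - 2κ₀² (t - s) D`, and the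
last term, carrying the small factor `t - s < δ`, integrates to at most `8 κ₀² δ ∫₀^∞ ŝ⁻³ Ω(ŝ⁻²) dŝ`.
-/

open MeasureTheory Set Real

noncomputable def selfSimilarVar (κ t s : ℝ) : ℝ := √(t - s) / exp (-κ * s)

noncomputable def nearFieldDensity (κ t : ℝ) (Ω : ℝ → ℝ) (s : ℝ) : ℝ :=
  exp (-κ * s) ^ 2 / (t - s) ^ 2 * Ω (exp (-κ * s) ^ 2 / (t - s))

section
variable {κ t δ s : ℝ}

@[simp] lemma selfSimilarVar_self : selfSimilarVar κ t t = 0 := by simp [selfSimilarVar]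

lemma selfSimilarVar_nonneg : 0 ≤ selfSimilarVar κ t s :=
  div_nonneg (sqrt_nonneg _) (exp_pos _).le

lemma selfSimilarVar_sub_self : selfSimilarVar κ t (t - δ) = √δ / exp (-κ * (t - δ)) := by
  rw [selfSimilarVar, sub_sub_cancel]

lemma continuous_selfSimilarVar : Continuous (selfSimilarVar κ t) :=
  (continuous_const.sub continuous_id).sqrt.div (by fun_prop) fun _ => (exp_pos _).ne'

lemma hasDerivAt_selfSimilarVar (h : s < t) :
    HasDerivAt (selfSimilarVar κ t)
      ((κ * (t - s) - 1 / 2) / (√(t - s) * exp (-κ * s))) s := by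
  have hr : 0 < t - s := sub_pos.2 h
  have hsqrt : HasDerivAt (fun u => √(t - u)) (-1 / (2 * √(t - s))) s := by
    simpa using ((hasDerivAt_id s).const_sub t).sqrt hr.ne'
  have hexp : HasDerivAt (fun u => exp (-κ * u)) (-κ * exp (-κ * s)) s := by
    simpa [mul_comm] using ((hasDerivAt_id s).const_mul (-κ)).exp
  refine (hsqrt.div hexp (exp_pos _).ne').congr_deriv ?_
  have hsq := sq_sqrt hr.le
  have hpos := sqrt_pos.2 hr
  field_simp
  linear_combination 2 * κ * hsq

lemma strictAntiOn_selfSimilarVar (hκδ : κ * δ < 1 / 2) :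
    StrictAntiOn (selfSimilarVar κ t) (Icc (t - δ) t) := by
  refine strictAntiOn_of_deriv_neg (convex_Icc _ _) continuous_selfSimilarVar.continuousOn ?_
  intro s hs
  rw [interior_Icc] at hs
  obtain ⟨hδs, hst⟩ := hs
  rw [(hasDerivAt_selfSimilarVar hst).deriv]
  have hr : 0 < t - s := sub_pos.2 hst
  exact div_neg_of_neg_of_pos (by nlinarith) (by positivity)

lemma image_selfSimilarVar_Ioo (hδ : 0 ≤ δ) (hκδ : κ * δ < 1 / 2) :
    selfSimilarVar κ t '' Ioo (t - δ) t = Ioo 0 (selfSimilarVar κ t (t - δ)) := by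
  rw [continuous_selfSimilarVar.continuousOn.image_Ioo_of_strictAntiOn (by linarith)
    (strictAntiOn_selfSimilarVar hκδ), selfSimilarVar_self]

lemma selfSimilarVar_rpow_neg_two (h : s < t) :
    selfSimilarVar κ t s ^ (-2 : ℝ) = exp (-κ * s) ^ 2 / (t - s) := by
  rw [selfSimilarVar, rpow_neg (by positivity), rpow_two, div_pow, sq_sqrt (sub_pos.2 h).le,
    inv_div]

lemma selfSimilarVar_rpow_neg_three (h : s < t) :
    selfSimilarVar κ t s ^ (-3 : ℝ) = exp (-κ * s) ^ 3 / √(t - s) ^ 3 := by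
  rw [selfSimilarVar, rpow_neg (by positivity), show (3 : ℝ) = (3 : ℕ) by norm_num, rpow_natCast,
    div_pow, inv_div]

variable {Ω : ℝ → ℝ}

lemma abs_deriv_mul_kernel_selfSimilarVar (h : s < t) (hκ : κ * (t - s) ≤ 1 / 2) :
    |(κ * (t - s) - 1 / 2) / (√(t - s) * exp (-κ * s))| *
        (selfSimilarVar κ t s ^ (-3 : ℝ) * Ω (selfSimilarVar κ t s ^ (-2 : ℝ))) =
      (1 / 2 - κ * (t - s)) * nearFieldDensity κ t Ω s := by
  have hr : 0 < t - s := sub_pos.2 h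
  have hsqrt : √(t - s) ^ 4 = (t - s) ^ 2 := by
    rw [show 4 = 2 * 2 by rfl, pow_mul, sq_sqrt hr.le]
  rw [selfSimilarVar_rpow_neg_two h, selfSimilarVar_rpow_neg_three h, abs_div,
    abs_of_nonpos (by linarith), abs_of_pos (by positivity), nearFieldDensity]
  have := sqrt_pos.2 hr
  field_simp
  rw [hsqrt]
  ring

lemma abs_deriv_mul_kernel_eqOn (hκδ : κ * δ < 1 / 2) :
    EqOn (fun s => |(κ * (t - s) - 1 / 2) / (√(t - s) * exp (-κ * s))| •
        (selfSimilarVar κ t s ^ (-3 : ℝ) * Ω (selfSimilarVar κ t s ^ (-2 : ℝ))))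
      (fun s => (1 / 2 - κ * (t - s)) * nearFieldDensity κ t Ω s) (Ioo (t - δ) t) := by
  rintro s ⟨hδs, hst⟩
  exact abs_deriv_mul_kernel_selfSimilarVar hst (by nlinarith)

lemma hasDerivWithinAt_selfSimilarVar_Ioo :
    ∀ s ∈ Ioo (t - δ) t, HasDerivWithinAt (selfSimilarVar κ t)
      ((κ * (t - s) - 1 / 2) / (√(t - s) * exp (-κ * s))) (Ioo (t - δ) t) s :=
  fun _ hs => (hasDerivAt_selfSimilarVar hs.2).hasDerivWithinAt

lemma injOn_selfSimilarVar (hκδ : κ * δ < 1 / 2) : InjOn (selfSimilarVar κ t) (Ioo (t - δ) t) :=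
  (strictAntiOn_selfSimilarVar hκδ).injOn.mono Ioo_subset_Icc_self

lemma integral_kernel_eq_integral_nearFieldDensity (hδ : 0 ≤ δ) (hκδ : κ * δ < 1 / 2) :
    ∫ u in Ioo 0 (selfSimilarVar κ t (t - δ)), u ^ (-3 : ℝ) * Ω (u ^ (-2 : ℝ)) =
      ∫ s in Ioo (t - δ) t, (1 / 2 - κ * (t - s)) * nearFieldDensity κ t Ω s := by
  rw [← image_selfSimilarVar_Ioo hδ hκδ, integral_image_eq_integral_abs_deriv_smul
    measurableSet_Ioo hasDerivWithinAt_selfSimilarVar_Ioo (injOn_selfSimilarVar hκδ)]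
  exact setIntegral_congr_fun measurableSet_Ioo (abs_deriv_mul_kernel_eqOn hκδ)

lemma integrableOn_kernel_iff_integrableOn_nearFieldDensity (hδ : 0 ≤ δ)
    (hκδ : κ * δ < 1 / 2) :
    IntegrableOn (fun u => u ^ (-3 : ℝ) * Ω (u ^ (-2 : ℝ))) (Ioo 0 (selfSimilarVar κ t (t - δ))) ↔
      IntegrableOn (fun s => (1 / 2 - κ * (t - s)) * nearFieldDensity κ t Ω s)
        (Ioo (t - δ) t) := by
  rw [← image_selfSimilarVar_Ioo hδ hκδ, integrableOn_image_iff_integrableOn_abs_deriv_smul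
    measurableSet_Ioo hasDerivWithinAt_selfSimilarVar_Ioo (injOn_selfSimilarVar hκδ)]
  exact integrableOn_congr_fun (abs_deriv_mul_kernel_eqOn hκδ) measurableSet_Ioo

lemma continuousOn_nearFieldDensity (hΩ : Continuous Ω) :
    ContinuousOn (nearFieldDensity κ t Ω) (Ioo (t - δ) t) := by
  have hne : ∀ s ∈ Ioo (t - δ) t, t - s ≠ 0 := fun s hs => (sub_pos.2 hs.2).ne'
  have harg : ContinuousOn (fun s => exp (-κ * s) ^ 2 / (t - s)) (Ioo (t - δ) t) :=
    ContinuousOn.div (by fun_prop) (by fun_prop) hne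
  exact (ContinuousOn.div (by fun_prop) (by fun_prop) fun s hs => pow_ne_zero 2 (hne s hs)).mul
    (hΩ.comp_continuousOn harg)

lemma sub_mul_nearFieldDensity_mem_Icc (hΩ : ∀ τ, 0 ≤ Ω τ) (hκδ : κ * δ ≤ 1 / 4)
    (hs : s ∈ Ioo (t - δ) t) :
    (t - s) * nearFieldDensity κ t Ω s ∈
      Icc 0 (4 * δ * ((1 / 2 - κ * (t - s)) * nearFieldDensity κ t Ω s)) := by
  obtain ⟨hδs, hst⟩ := hs
  have hr : 0 < t - s := sub_pos.2 hst
  have hD : 0 ≤ nearFieldDensity κ t Ω s := mul_nonneg (by positivity) (hΩ _)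
  refine ⟨mul_nonneg hr.le hD, ?_⟩
  rw [← mul_assoc]
  exact mul_le_mul_of_nonneg_right (by nlinarith) hD

lemma integrableOn_sub_mul_nearFieldDensity (hΩc : Continuous Ω) (hΩ0 : ∀ τ, 0 ≤ Ω τ)
    (hκδ : κ * δ ≤ 1 / 4)
    (hP : IntegrableOn (fun s => (1 / 2 - κ * (t - s)) * nearFieldDensity κ t Ω s)
      (Ioo (t - δ) t)) :
    IntegrableOn (fun s => (t - s) * nearFieldDensity κ t Ω s) (Ioo (t - δ) t) := by
  refine (hP.const_mul (4 * δ)).mono' (((continuous_sub_left t).continuousOn.mul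
    (continuousOn_nearFieldDensity hΩc)).aestronglyMeasurable measurableSet_Ioo) ?_
  refine (ae_restrict_iff' measurableSet_Ioo).2 (ae_of_all _ fun s hs => ?_)
  obtain ⟨hQ0, hQP⟩ := sub_mul_nearFieldDensity_mem_Icc hΩ0 hκδ hs
  rwa [Real.norm_eq_abs, abs_of_nonneg hQ0]

lemma setIntegral_sub_mul_nearFieldDensity_le (hΩ0 : ∀ τ, 0 ≤ Ω τ)
    (hint : IntegrableOn (fun u : ℝ => u ^ (-3 : ℝ) * Ω (u ^ (-2 : ℝ))) (Ioi 0))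
    (hδ : 0 ≤ δ) (hκδ : κ * δ ≤ 1 / 4)
    (hQ : IntegrableOn (fun s => (t - s) * nearFieldDensity κ t Ω s) (Ioo (t - δ) t)) :
    ∫ s in Ioo (t - δ) t, (t - s) * nearFieldDensity κ t Ω s ≤
      4 * δ * ∫ u in Ioi 0, u ^ (-3 : ℝ) * Ω (u ^ (-2 : ℝ)) := by
  have hκδ' : κ * δ < 1 / 2 := by linarith
  have hP := (integrableOn_kernel_iff_integrableOn_nearFieldDensity (t := t) hδ hκδ').1
    (hint.mono_set fun _ hu => hu.1)
  calc ∫ s in Ioo (t - δ) t, (t - s) * nearFieldDensity κ t Ω s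
      ≤ ∫ s in Ioo (t - δ) t, 4 * δ * ((1 / 2 - κ * (t - s)) * nearFieldDensity κ t Ω s) :=
        setIntegral_mono_on hQ (hP.const_mul _) measurableSet_Ioo
          fun s hs => (sub_mul_nearFieldDensity_mem_Icc hΩ0 hκδ hs).2
    _ = 4 * δ * ∫ u in Ioo 0 (selfSimilarVar κ t (t - δ)), u ^ (-3 : ℝ) * Ω (u ^ (-2 : ℝ)) := by
        rw [integral_const_mul, integral_kernel_eq_integral_nearFieldDensity hδ hκδ']
    _ ≤ 4 * δ * ∫ u in Ioi 0, u ^ (-3 : ℝ) * Ω (u ^ (-2 : ℝ)) := by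
        refine mul_le_mul_of_nonneg_left (setIntegral_mono_set hint ?_
          Ioo_subset_Ioi_self.eventuallyLE) (by positivity)
        exact (ae_restrict_iff' measurableSet_Ioi).2 (ae_of_all _ fun u hu =>
          mul_nonneg (rpow_nonneg hu.le _) (hΩ0 _))

lemma abs_integral_nearField_add_le (hΩc : Continuous Ω) (hΩ0 : ∀ τ, 0 ≤ Ω τ)
    (hint : IntegrableOn (fun u : ℝ => u ^ (-3 : ℝ) * Ω (u ^ (-2 : ℝ))) (Ioi 0))
    (hδ : 0 ≤ δ) (hκδ : κ * δ ≤ 1 / 4) :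
    |(∫ s in (t - δ)..t, exp (-κ * s) * (-κ * exp (-κ * s)) / (t - s) ^ 2 *
          Ω (exp (-κ * s) ^ 2 / (t - s))) +
        2 * κ * ∫ u in (0 : ℝ)..selfSimilarVar κ t (t - δ), u ^ (-3 : ℝ) * Ω (u ^ (-2 : ℝ))| ≤
      8 * κ ^ 2 * δ * ∫ u in Ioi 0, u ^ (-3 : ℝ) * Ω (u ^ (-2 : ℝ)) := by
  have hκδ' : κ * δ < 1 / 2 := by linarith
  set P := fun s => (1 / 2 - κ * (t - s)) * nearFieldDensity κ t Ω s
  set Q := fun s => (t - s) * nearFieldDensity κ t Ω s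
  have hP : IntegrableOn P (Ioo (t - δ) t) :=
    (integrableOn_kernel_iff_integrableOn_nearFieldDensity hδ hκδ').1
      (hint.mono_set fun _ hu => hu.1)
  have hQ : IntegrableOn Q (Ioo (t - δ) t) := integrableOn_sub_mul_nearFieldDensity hΩc hΩ0 hκδ hP
  have hsplit : ∫ s in Ioo (t - δ) t, exp (-κ * s) * (-κ * exp (-κ * s)) / (t - s) ^ 2 *
      Ω (exp (-κ * s) ^ 2 / (t - s)) =
        ∫ s in Ioo (t - δ) t, (-(2 * κ) * P s - 2 * κ ^ 2 * Q s) := by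
    congr 1 with s
    simp only [P, Q, nearFieldDensity]
    ring
  have herror : (∫ s in (t - δ)..t, exp (-κ * s) * (-κ * exp (-κ * s)) / (t - s) ^ 2 *
      Ω (exp (-κ * s) ^ 2 / (t - s))) +
        2 * κ * ∫ u in (0 : ℝ)..selfSimilarVar κ t (t - δ), u ^ (-3 : ℝ) * Ω (u ^ (-2 : ℝ)) =
      -(2 * κ ^ 2 * ∫ s in Ioo (t - δ) t, Q s) := by
    rw [intervalIntegral.integral_of_le (by linarith), integral_Ioc_eq_integral_Ioo, hsplit,
      intervalIntegral.integral_of_le selfSimilarVar_nonneg, integral_Ioc_eq_integral_Ioo,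
      integral_kernel_eq_integral_nearFieldDensity hδ hκδ',
      integral_sub (hP.const_mul _) (hQ.const_mul _), integral_const_mul, integral_const_mul]
    ring
  have hQ0 : 0 ≤ ∫ s in Ioo (t - δ) t, Q s :=
    setIntegral_nonneg measurableSet_Ioo fun s hs => (sub_mul_nearFieldDensity_mem_Icc hΩ0 hκδ hs).1
  rw [herror, abs_neg, abs_of_nonneg (by positivity)]
  linarith [mul_le_mul_of_nonneg_left (setIntegral_sub_mul_nearFieldDensity_le hΩ0 hint hδ hκδ hQ)
    (sq_nonneg κ)]

end

/-- Change-of-variables computation fixing the blow-up rate: with μ(t) = e^{-κ₀t},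
the map s ↦ √(t-s)/μ(s) has derivative -((1/2)(t-s)^{-1/2} + μ'(s)·ŝ)/μ(s), and the
near-field integral ∫_{t-δ}^t (μμ'/(t-s)²)Ω(μ²/(t-s))ds equals
-2κ₀(∫₀^{√δ/μ(t-δ)} ŝ⁻³Ω(ŝ⁻²)dŝ + o(1)) as δκ₀ → 0 and √δ/μ(t-δ) → ∞. -/
theorem blowup_rate_change_of_variables (κ₀ : ℝ) (hκ : 0 < κ₀)
    (μ : ℝ → ℝ) (hμ : ∀ t, μ t = Real.exp (-κ₀ * t))
    (Ω : ℝ → ℝ) (hΩc : Continuous Ω) (hΩ0 : ∀ τ, 0 ≤ Ω τ)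
    (hΩint : IntegrableOn (fun u : ℝ => u ^ (-3 : ℝ) * Ω (u ^ (-2 : ℝ))) (Ioi 0)) :
    (∀ t s : ℝ, s < t →
      HasDerivAt (fun u => Real.sqrt (t - u) / μ u)
        (-((1 / 2) * (t - s) ^ (-(1 / 2) : ℝ)
            + (-κ₀ * μ s) * (Real.sqrt (t - s) / μ s)) / μ s) s) ∧
    (∀ ε > 0, ∃ δ₀ > 0, ∃ A : ℝ, ∀ δ : ℝ, 0 < δ → δ < δ₀ → ∀ t : ℝ,
      A ≤ Real.sqrt δ / μ (t - δ) →
      |(∫ s in (t - δ)..t, μ s * (-κ₀ * μ s) / (t - s) ^ 2 * Ω ((μ s) ^ 2 / (t - s)))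
          + 2 * κ₀ *
            ∫ u in (0 : ℝ)..(Real.sqrt δ / μ (t - δ)), u ^ (-3 : ℝ) * Ω (u ^ (-2 : ℝ))|
        ≤ 2 * κ₀ * ε) := by
  obtain rfl : μ = fun t => exp (-κ₀ * t) := funext hμ
  refine ⟨fun t s hst => (hasDerivAt_selfSimilarVar hst).congr_deriv ?_, fun ε hε => ?_⟩
  · have hr : 0 < t - s := sub_pos.2 hst
    have hsqrt := sqrt_pos.2 hr
    rw [rpow_neg hr.le, ← sqrt_eq_rpow]
    field_simp
    rw [sq_sqrt hr.le]
    ring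
  set C := ∫ u in Ioi 0, u ^ (-3 : ℝ) * Ω (u ^ (-2 : ℝ))
  have hC : 0 ≤ C := setIntegral_nonneg measurableSet_Ioi fun u hu =>
    mul_nonneg (rpow_nonneg (le_of_lt hu) _) (hΩ0 _)
  refine ⟨min (1 / (4 * κ₀)) (ε / (4 * κ₀ * (C + 1))), by positivity, 0,
    fun δ hδ hδδ₀ t _ => ?_⟩
  obtain ⟨hδκ, hδε⟩ := lt_min_iff.1 hδδ₀
  rw [lt_div_iff₀ (by positivity)] at hδκ hδε
  have hbound := abs_integral_nearField_add_le (κ := κ₀) (t := t) hΩc hΩ0 hΩint hδ.le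
    (by linarith)
  rw [selfSimilarVar_sub_self] at hbound
  refine hbound.trans ?_
  nlinarith
end
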